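/- arXiv:1304.6179 — 3 statements merged into one kernel-verified Lean document; each statement's English description precedes it below -/
import Mathlib

section
/- Let p > 3 be prime, ζ a primitive p-th root of unity, q a prime ideal of ℤ[ζ] coprime to p, and x, y integers coprime to the rational prime under q such that xζ ≡ y mod q and x + y is a p-th power of an integer. Then for 1 ≤ k ≤ p-2, the p-th power residue symbol satisfies ((x + ζ^k y)/q)_K = ((ζ^{k/2})/q)_K · ((ε_{k+1})/q)_K, where ε_{k+1} = ζ^((1-(k+1))/2)·(1+ζ^{k+1})/(1+ζ) and half-exponents are taken modulo p. -/
open NumberField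

/-- The exponent `m` with `2*m ≡ a (mod p)`, i.e. `ζ^(a/2)` means `ζ^(halfOf p a)`. -/
def halfOf (p : ℕ) (a : ℤ) : ℕ := (((a : ℤ) : ZMod p) * (2 : ZMod p)⁻¹).val

/-- Equality of `p`-th power residue symbols at the prime ideal `q`, encoded via the defining
congruence `α^((N(q)-1)/p) ≡ β^((N(q)-1)/p) (mod q)`. -/
def powResEq {R : Type*} [CommRing R] [IsDedekindDomain R] [Module.Free ℤ R] [Module.Finite ℤ R]
    (q : Ideal R) (p : ℕ) (α β : R) : Prop :=
  α ^ ((Ideal.absNorm q - 1) / p) - β ^ ((Ideal.absNorm q - 1) / p) ∈ q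

/-!
Modulo `q` we have `y ≡ xζ`, hence `x + ζ^k y ≡ x (1 + ζ^(k+1))` and `x (1 + ζ) ≡ x + y = c^p`.
So `(x + ζ^k y)(1 + ζ) ≡ c^p (1 + ζ^(k+1))`, and `c^p` has trivial symbol because
`(c^p)^((N q - 1)/p) = c^(N q - 1) ≡ 1`; the divisibility `p ∣ N q - 1` holds because `ζ` stays
of order `p` in the residue field. The two half-exponents `k/2` and `-k/2` cancel.
-/

theorem pow_halfOf_mul_pow_halfOf_neg {M : Type*} [Monoid M] {p : ℕ} [NeZero p] {ζ : M}
    (hζ : ζ ^ p = 1) (a : ℤ) : ζ ^ halfOf p a * ζ ^ halfOf p (-a) = 1 := by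
  obtain ⟨t, ht⟩ : p ∣ halfOf p a + halfOf p (-a) := by
    rw [← ZMod.natCast_eq_zero_iff]
    push_cast [halfOf, ZMod.natCast_zmod_val]
    ring
  rw [← pow_add, ht, pow_mul, hζ, one_pow]

theorem IsPrimitiveRoot.orderOf_quotient_mk {R : Type*} [CommRing R] [IsDomain R] {p : ℕ}
    [hp : Fact p.Prime] {ζ : R} (hζ : IsPrimitiveRoot ζ p) {q : Ideal R} (hqp : (p : R) ∉ q) :
    orderOf (Ideal.Quotient.mk q ζ) = p := by
  refine orderOf_eq_prime (by rw [← map_pow, hζ.pow_eq_one, map_one]) fun hζq ↦ hqp ?_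
  have hsum := congrArg (Ideal.Quotient.mk q) (hζ.geom_sum_eq_zero hp.out.one_lt)
  simp only [map_sum, map_pow, hζq, one_pow, Finset.sum_const, Finset.card_range, nsmul_eq_mul,
    mul_one, map_zero] at hsum
  rwa [← map_natCast (Ideal.Quotient.mk q), Ideal.Quotient.eq_zero_iff_mem] at hsum

section AbsNorm

variable {R : Type*} [CommRing R] [IsDedekindDomain R] [Module.Free ℤ R] [Module.Finite ℤ R]
  {q : Ideal R}

theorem Ideal.Quotient.mk_pow_absNorm_sub_one (hq : q.IsPrime) (hq0 : q ≠ ⊥) {a : R}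
    (ha : a ∉ q) : Ideal.Quotient.mk q a ^ (Ideal.absNorm q - 1) = 1 := by
  have := hq.isMaximal hq0
  let := Ideal.Quotient.field q
  let := @Fintype.ofFinite _ (q.finiteQuotientOfFreeOfNeBot hq0)
  rw [Ideal.absNorm_apply, Submodule.cardQuot_apply, Nat.card_eq_fintype_card]
  exact FiniteField.pow_card_sub_one_eq_one _ (by rwa [ne_eq, Ideal.Quotient.eq_zero_iff_mem])

theorem IsPrimitiveRoot.dvd_absNorm_sub_one {p : ℕ} [Fact p.Prime] {ζ : R}
    (hζ : IsPrimitiveRoot ζ p) (hq : q.IsPrime) (hq0 : q ≠ ⊥) (hqp : (p : R) ∉ q) :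
    p ∣ Ideal.absNorm q - 1 := by
  rw [← hζ.orderOf_quotient_mk hqp]
  refine orderOf_dvd_of_pow_eq_one (Ideal.Quotient.mk_pow_absNorm_sub_one hq hq0 fun hζq ↦ ?_)
  exact hq.ne_top (Ideal.eq_top_of_isUnit_mem q hζq (hζ.isUnit (NeZero.ne p)))

variable {p : ℕ} {α β γ : R}

theorem powResEq_of_sub_mem (h : α - β ∈ q) : powResEq q p α β :=
  Ideal.mem_of_dvd _ (sub_dvd_pow_sub_pow α β _) h

theorem powResEq.trans (h₁ : powResEq q p α β) (h₂ : powResEq q p β γ) : powResEq q p α γ := by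
  simpa only [powResEq, sub_add_sub_cancel] using q.add_mem h₁ h₂

theorem powResEq_pow_mul (hq : q.IsPrime) (hq0 : q ≠ ⊥) (hpq : p ∣ Ideal.absNorm q - 1) {c : R}
    (hc : c ∉ q) : powResEq q p (c ^ p * α) α := by
  rw [powResEq, ← Ideal.Quotient.eq, map_pow, map_pow, map_mul, mul_pow, map_pow, ← pow_mul,
    Nat.mul_div_cancel' hpq, Ideal.Quotient.mk_pow_absNorm_sub_one hq hq0 hc, one_mul]

end AbsNorm

/-- The residue symbol is multiplicative and `1 + ζ` is coprime to `q`, so the denominator of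
`ε_{k+1} = ζ^((1-(k+1))/2)·(1+ζ^{k+1})/(1+ζ)` is cleared by multiplying both sides by `1 + ζ`. -/
theorem symbol_x_add_zeta_pow_y_general (p : ℕ) (hp : p.Prime)
    (K : Type*) [Field K] [NumberField K]
    (ζ : 𝓞 K) (hζ : IsPrimitiveRoot ζ p)
    (q : Ideal (𝓞 K)) (hq : q.IsPrime) (hq0 : q ≠ ⊥) (hqp : (p : 𝓞 K) ∉ q)
    (x y : ℤ)
    (hdvd : (x : 𝓞 K) * ζ - (y : 𝓞 K) ∈ q)
    (c : ℤ) (hc : x + y = c ^ p) (hcq : (c : 𝓞 K) ∉ q) :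
    ∀ k : ℕ, 1 ≤ k → k ≤ p - 2 →
      powResEq q p (((x : 𝓞 K) + ζ ^ k * (y : 𝓞 K)) * (1 + ζ))
        (ζ ^ halfOf p (k : ℤ) * (ζ ^ halfOf p (1 - ((k : ℤ) + 1)) * (1 + ζ ^ (k + 1)))) := by
  intro k _ _
  have := Fact.mk hp
  rw [show 1 - ((k : ℤ) + 1) = -k by ring, ← mul_assoc,
    pow_halfOf_mul_pow_halfOf_neg hζ.pow_eq_one, one_mul]
  refine .trans (powResEq_of_sub_mem ?_)
    (powResEq_pow_mul hq hq0 (hζ.dvd_absNorm_sub_one hq hq0 hqp) hcq)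
  have hcp : (c : 𝓞 K) ^ p = x + y := by exact_mod_cast hc.symm
  rw [hcp, show ((x : 𝓞 K) + ζ ^ k * y) * (1 + ζ) - (x + y) * (1 + ζ ^ (k + 1))
    = (x * ζ - y) * (1 - ζ ^ k) by ring]
  exact q.mul_mem_right _ hdvd

/-- `(x + ζ^k y / q) = (ζ^{k/2} / q) · (ε_{k+1} / q)` with
`ε_{k+1} = ζ^((1-(k+1))/2)·(1+ζ^{k+1})/(1+ζ)`; since the residue symbol is multiplicative and
`1 + ζ` is coprime to `q`, this is encoded by clearing the denominator `1 + ζ`. -/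
theorem symbol_x_add_zeta_pow_y (p : ℕ) (hp : p.Prime) (hp3 : 3 < p)
    (K : Type*) [Field K] [NumberField K]
    (hK : IsCyclotomicExtension {p} ℚ K)
    (ζ : 𝓞 K) (hζ : IsPrimitiveRoot ζ p)
    (q : Ideal (𝓞 K)) (hq : q.IsPrime) (hq0 : q ≠ ⊥) (hqp : (p : 𝓞 K) ∉ q)
    (x y : ℤ) (hx : (x : 𝓞 K) ∉ q) (hy : (y : 𝓞 K) ∉ q)
    (hdvd : (x : 𝓞 K) * ζ - (y : 𝓞 K) ∈ q)
    (c : ℤ) (hc : x + y = c ^ p) (hcq : (c : 𝓞 K) ∉ q) :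
    ∀ k : ℕ, 1 ≤ k → k ≤ p - 2 →
      powResEq q p (((x : 𝓞 K) + ζ ^ k * (y : 𝓞 K)) * (1 + ζ))
        (ζ ^ halfOf p (k : ℤ) * (ζ ^ halfOf p (1 - ((k : ℤ) + 1)) * (1 + ζ ^ (k + 1)))) :=
  symbol_x_add_zeta_pow_y_general p hp K ζ hζ q hq hq0 hqp x y hdvd c hc hcq
end

section
/- Let p > 3 be prime, ζ a primitive p-th root of unity, q a prime ideal of ℤ[ζ] coprime to p lying over a rational prime q ≡ 1 mod p², and x, y integers coprime to q such that xζ ≡ -y mod q and x + y is a p-th power of an integer. Then for 1 ≤ k ≤ p-2, ((x + ζ^k y)/q)_K = (ϖ_{k+1}/q)_K, where ϖ_{k+1} = ζ^((1-(k+1))/2)·(1-ζ^{k+1})/(1-ζ). -/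
/-!
Modulo `q` we have `y ≡ -xζ`, hence `(x + ζ^k y)(1 - ζ) ≡ x(1 - ζ)(1 - ζ^{k+1})` and
`x(1 - ζ) ≡ x + y = c^p`. The symbol is computed by raising to the power `(N q - 1)/p`, which
kills the `p`-th power `c^p` and, since `N q` is a power of `l ≡ 1 mod p²` and so
`p² ∣ N q - 1`, also every power of `ζ`.
-/

open NumberField

namespace FiniteField

variable {F : Type*} [Field F] [Fintype F]

theorem card_modEq_one {l d : ℕ} [CharP F l] (h : l ≡ 1 [MOD d]) :
    Fintype.card F ≡ 1 [MOD d] := by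
  obtain ⟨n, -, hcard⟩ := FiniteField.card F l
  simpa [hcard] using h.pow n

theorem pow_pow_card_sub_one_div_eq_one {p : ℕ} (hp : p ∣ Fintype.card F - 1) {a : F}
    (ha : a ≠ 0) : (a ^ p) ^ ((Fintype.card F - 1) / p) = 1 := by
  rw [← pow_mul, Nat.mul_div_cancel' hp, pow_card_sub_one_eq_one a ha]

theorem pow_card_sub_one_div_eq_one_of_pow_eq_one {p : ℕ} (hp : p ^ 2 ∣ Fintype.card F - 1)
    {z : F} (hz : z ^ p = 1) : z ^ ((Fintype.card F - 1) / p) = 1 := by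
  obtain ⟨m, hm⟩ := Nat.dvd_div_of_mul_dvd (sq p ▸ hp)
  rw [hm, pow_mul, hz, one_pow]

end FiniteField

theorem Ideal.Quotient.charP_of_natCast_mem {R : Type*} [CommRing R] {q : Ideal R} (hq : q ≠ ⊤)
    {l : ℕ} (hl : l.Prime) (hlq : (l : R) ∈ q) : CharP (R ⧸ q) l := by
  have := Ideal.Quotient.nontrivial_iff.2 hq
  rw [CharP.charP_iff_prime_eq_zero hl, ← map_natCast (Ideal.Quotient.mk q)]
  exact Ideal.Quotient.eq_zero_iff_mem.2 hlq

theorem IsPrimitiveRoot.mk_ne_one {R : Type*} [CommRing R] [IsDomain R] {ζ : R} {p : ℕ}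
    (hζ : IsPrimitiveRoot ζ p) (hp : 1 < p) {q : Ideal R} (hqp : (p : R) ∉ q) :
    Ideal.Quotient.mk q ζ ≠ 1 := by
  intro h
  apply hqp
  rw [← Ideal.Quotient.eq_zero_iff_mem, map_natCast]
  simpa [h] using congrArg (Ideal.Quotient.mk q) (hζ.geom_sum_eq_zero hp)

section powResEq

variable {R : Type*} [CommRing R] [IsDedekindDomain R] [Module.Free ℤ R] [Module.Finite ℤ R]
  {q : Ideal R}

theorem powResEq_iff_mk {p : ℕ} {α β : R} :
    powResEq q p α β ↔ Ideal.Quotient.mk q α ^ ((Ideal.absNorm q - 1) / p) =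
      Ideal.Quotient.mk q β ^ ((Ideal.absNorm q - 1) / p) := by
  rw [powResEq, ← map_pow, ← map_pow, Ideal.Quotient.eq]

variable [q.IsMaximal]

theorem Ideal.absNorm_modEq_one_of_natCast_mem (hq0 : q ≠ ⊥) {l d : ℕ} (hl : l.Prime)
    (hlq : (l : R) ∈ q) (h : l ≡ 1 [MOD d]) : Ideal.absNorm q ≡ 1 [MOD d] := by
  have := Ideal.finiteQuotientOfFreeOfNeBot q hq0
  let := Fintype.ofFinite (R ⧸ q)
  let := Ideal.Quotient.field q
  have := Ideal.Quotient.charP_of_natCast_mem (Ideal.IsMaximal.ne_top ‹_›) hl hlq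
  rw [Ideal.absNorm_apply, Submodule.cardQuot_apply, Nat.card_eq_fintype_card]
  exact FiniteField.card_modEq_one h

theorem powResEq_of_mk_eq_pow_mul (hq0 : q ≠ ⊥) {p : ℕ} (hN : Ideal.absNorm q ≡ 1 [MOD p ^ 2])
    {α β : R} {a z w : R ⧸ q} (ha : a ≠ 0) (hz : z ^ p = 1) (n : ℕ)
    (hα : Ideal.Quotient.mk q α = a ^ p * w) (hβ : Ideal.Quotient.mk q β = z ^ n * w) :
    powResEq q p α β := by
  have := Ideal.finiteQuotientOfFreeOfNeBot q hq0
  let := Fintype.ofFinite (R ⧸ q)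
  let := Ideal.Quotient.field q
  rw [Ideal.absNorm_apply, Submodule.cardQuot_apply, Nat.card_eq_fintype_card] at hN
  have hdvd : p ^ 2 ∣ Fintype.card (R ⧸ q) - 1 :=
    (Nat.modEq_iff_dvd' Fintype.card_pos).1 hN.symm
  rw [powResEq_iff_mk, Ideal.absNorm_apply, Submodule.cardQuot_apply, Nat.card_eq_fintype_card,
    hα, hβ, mul_pow, mul_pow, pow_right_comm z,
    FiniteField.pow_pow_card_sub_one_div_eq_one (dvd_of_mul_left_dvd (sq p ▸ hdvd)) ha,
    FiniteField.pow_card_sub_one_div_eq_one_of_pow_eq_one hdvd hz, one_pow]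

end powResEq

/-- Both `x + ζ^k y` and `ϖ_{k+1}` appear multiplied by `1 - ζ`, which clears the denominator
of `ϖ_{k+1}`. -/
theorem symbol_x_add_zeta_pow_y_varpi_general (p : ℕ) (hp : p.Prime)
    (K : Type*) [Field K] [NumberField K]
    (ζ : 𝓞 K) (hζ : IsPrimitiveRoot ζ p)
    (q : Ideal (𝓞 K)) (hq : q.IsPrime) (hq0 : q ≠ ⊥) (hqp : (p : 𝓞 K) ∉ q)
    (l : ℕ) (hl : l.Prime) (hlq : (l : 𝓞 K) ∈ q) (hl1 : l % p ^ 2 = 1)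
    (x y : ℤ) (hx : ¬ (l : ℤ) ∣ x)
    (hdvd : (x : 𝓞 K) * ζ + (y : 𝓞 K) ∈ q)
    (c : ℤ) (hc : x + y = c ^ p) :
    ∀ k : ℕ, 1 ≤ k → k ≤ p - 2 →
      powResEq q p (((x : 𝓞 K) + ζ ^ k * (y : 𝓞 K)) * (1 - ζ))
        (ζ ^ halfOf p (1 - ((k : ℤ) + 1)) * (1 - ζ ^ (k + 1))) := by
  intro k _ _
  have := hq.isMaximal hq0
  let := Ideal.Quotient.field q
  have := Ideal.Quotient.charP_of_natCast_mem hq.ne_top hl hlq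
  set π := Ideal.Quotient.mk q
  have hx0 : π x ≠ 0 := by rwa [map_intCast, Ne, CharP.intCast_eq_zero_iff _ l]
  have hy : π y = -(π x * π ζ) := by
    have h := Ideal.Quotient.eq_zero_iff_mem.2 hdvd
    rw [map_add, map_mul] at h
    linear_combination h
  have hxc : π x * (1 - π ζ) = π c ^ p := by
    have h : π x + π y = π c ^ p := by
      rw [← map_add, ← map_pow]
      exact congrArg π (mod_cast hc)
    linear_combination h - hy
  have hc0 : π c ≠ 0 := by
    intro h
    rw [h, zero_pow hp.ne_zero, mul_eq_zero, sub_eq_zero] at hxc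
    exact hxc.elim hx0 (hζ.mk_ne_one hp.one_lt hqp ∘ Eq.symm)
  have hN : Ideal.absNorm q ≡ 1 [MOD p ^ 2] :=
    Ideal.absNorm_modEq_one_of_natCast_mem hq0 hl hlq
      (hl1.trans (Nat.mod_eq_of_lt (Nat.one_lt_pow two_ne_zero hp.one_lt)).symm)
  have hζp : π ζ ^ p = 1 := by rw [← map_pow, hζ.pow_eq_one, map_one]
  refine powResEq_of_mk_eq_pow_mul hq0 hN hc0 hζp (halfOf p (1 - ((k : ℤ) + 1)))
    (w := 1 - π ζ ^ (k + 1)) ?_ ?_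
  · rw [← hxc, map_mul, map_add, map_mul, map_pow, hy, map_sub, map_one]
    ring
  · rw [map_mul, map_pow, map_sub, map_one, map_pow]

/-- `(x + ζ^k y / q) = (ϖ_{k+1} / q)` with `ϖ_{k+1} = ζ^((1-(k+1))/2)·(1-ζ^{k+1})/(1-ζ)`;
since the residue symbol is multiplicative, this is encoded by clearing the denominator `1 - ζ`
(the factor `ζ^{k/2}` has trivial symbol since the residue characteristic is `≡ 1 mod p²`). -/
theorem symbol_x_add_zeta_pow_y_varpi (p : ℕ) (hp : p.Prime) (hp3 : 3 < p)
    (K : Type*) [Field K] [NumberField K]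
    (hK : IsCyclotomicExtension {p} ℚ K)
    (ζ : 𝓞 K) (hζ : IsPrimitiveRoot ζ p)
    (q : Ideal (𝓞 K)) (hq : q.IsPrime) (hq0 : q ≠ ⊥) (hqp : (p : 𝓞 K) ∉ q)
    (l : ℕ) (hl : l.Prime) (hlq : (l : 𝓞 K) ∈ q) (hl1 : l % p ^ 2 = 1)
    (x y : ℤ) (hx : ¬ (l : ℤ) ∣ x) (hy : ¬ (l : ℤ) ∣ y)
    (hdvd : (x : 𝓞 K) * ζ + (y : 𝓞 K) ∈ q)
    (c : ℤ) (hc : x + y = c ^ p) :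
    ∀ k : ℕ, 1 ≤ k → k ≤ p - 2 →
      powResEq q p (((x : 𝓞 K) + ζ ^ k * (y : 𝓞 K)) * (1 - ζ))
        (ζ ^ halfOf p (1 - ((k : ℤ) + 1)) * (1 - ζ ^ (k + 1))) :=
  symbol_x_add_zeta_pow_y_varpi_general p hp K ζ hζ q hq hq0 hqp l hl hlq hl1 x y hx hdvd c hc
end

section
/- Let p be an odd prime and x, y, z pairwise coprime nonzero integers with x^p + y^p + z^p = 0 and p | y (second case of FLT). Then there exist integers y_0, y_1 and ν ≥ 1 with x + z = p^{νp-1} y_0^p, (x^p + z^p)/(x+z) = p·y_1^p, and y = -p^ν y_0 y_1, and moreover there exists an integer z_0 with x + y = z_0^p. -/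
/-!
Write `x ^ p + z ^ p = (x + z) * S` with `S = ∑ x ^ i * (-z) ^ (p - 1 - i)`. Since
`S ≡ p * x ^ (p - 1)` modulo `x + z`, every common divisor of `x + z` and `S` divides `p * x ^ (p - 1)`.
Fermat's little theorem turns `p ∣ y` into `p ∣ x + z`, and then `p` divides `S` exactly once (the first
step of lifting the exponent). Hence `x + z = p ^ m * s` and `S = p * t` with `s`, `t` coprime and
`s * t` a `p`-th power, and comparing `p`-adic valuations with `-y ^ p` gives `m + 1 = ν * p`.
For `x + y` the corresponding cofactor is coprime to `x + y` outright, because `p ∤ x + y`; as `p` is odd,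
signs are absorbed into `p`-th powers throughout.
-/

open Finset

section GeomSum

variable {R : Type*} [CommRing R]

theorem Odd.geom_sum₂_neg_mul {n : ℕ} (hn : Odd n) (a b : R) :
    (∑ i ∈ range n, a ^ i * (-b) ^ (n - 1 - i)) * (a + b) = a ^ n + b ^ n := by
  simpa [hn.neg_pow] using geom_sum₂_mul a (-b) n

theorem sub_dvd_geom_sum₂_sub (x y : R) (n : ℕ) :
    x - y ∣ ∑ i ∈ range n, x ^ i * y ^ (n - 1 - i) - n * x ^ (n - 1) := by
  have hxy : Ideal.Quotient.mk (Ideal.span {x - y}) y = Ideal.Quotient.mk _ x :=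
    (Ideal.Quotient.eq.2 (Ideal.mem_span_singleton_self _)).symm
  rw [← Ideal.mem_span_singleton, ← Ideal.Quotient.eq_zero_iff_mem, map_sub,
    RingHom.map_geom_sum₂, hxy, geom_sum₂_self]
  simp

theorem IsCoprime.geom_sum₂_neg_of_dvd_add {a b d : R} {n : ℕ} (hab : IsCoprime a b)
    (hd : d ∣ a + b) (hdn : IsCoprime d n) :
    IsCoprime d (∑ i ∈ range n, a ^ i * (-b) ^ (n - 1 - i)) := by
  have hda : IsCoprime d a :=
    (hab.symm.add_mul_left_left 1).of_isCoprime_of_dvd_left (by rwa [mul_one, add_comm])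
  obtain ⟨k, hk⟩ := (sub_neg_eq_add a b ▸ hd).trans (sub_dvd_geom_sum₂_sub a (-b) n)
  rw [sub_eq_iff_eq_add'.1 hk, IsCoprime.add_mul_left_right_iff]
  exact hdn.mul_right hda.pow_right

end GeomSum

theorem pow_mul_inj_of_not_dvd {M : Type*} [CommMonoidWithZero M] [IsCancelMulZero M] {p u v : M}
    (hp : Prime p) (hu : ¬p ∣ u) (hv : ¬p ∣ v) {i j : ℕ} (h : p ^ i * u = p ^ j * v) :
    i = j ∧ u = v := by
  have hij : i = j := by
    have := congrArg (emultiplicity p) h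
    rwa [emultiplicity_mul hp, emultiplicity_mul hp, emultiplicity_pow_self_of_prime hp,
      emultiplicity_pow_self_of_prime hp, emultiplicity_eq_zero.2 hu,
      emultiplicity_eq_zero.2 hv, add_zero, add_zero, Nat.cast_inj] at this
  subst hij
  exact ⟨rfl, mul_left_cancel₀ (pow_ne_zero _ hp.ne_zero) h⟩

namespace Int

variable {p : ℕ}

theorem exists_eq_prime_pow_mul_not_dvd (hp : p.Prime) {a : ℤ} (ha : a ≠ 0) :
    ∃ (m : ℕ) (s : ℤ), a = p ^ m * s ∧ ¬(p : ℤ) ∣ s :=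
  ⟨_, (Int.finiteMultiplicity_iff.2 ⟨by simpa using hp.ne_one, ha⟩).exists_eq_pow_mul_and_not_dvd⟩

theorem prime_dvd_add_of_dvd_pow_add_pow (hp : p.Prime) {a b : ℤ}
    (h : (p : ℤ) ∣ a ^ p + b ^ p) : (p : ℤ) ∣ a + b := by
  have := Fact.mk hp
  rw [← ZMod.intCast_zmod_eq_zero_iff_dvd] at h ⊢
  push_cast at h ⊢
  rwa [ZMod.pow_card, ZMod.pow_card] at h

theorem exists_geom_sum₂_neg_eq_prime_mul_not_dvd (hp : p.Prime) (hpodd : Odd p) {a b : ℤ}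
    (hpab : (p : ℤ) ∣ a + b) (hpa : ¬(p : ℤ) ∣ a) :
    ∃ t, ∑ i ∈ Finset.range p, a ^ i * (-b) ^ (p - 1 - i) = p * t ∧ ¬(p : ℤ) ∣ t := by
  have h := emultiplicity_geom_sum₂_eq_one (Nat.prime_iff_prime_int.mp hp) hpodd
    (by rwa [sub_neg_eq_add]) hpa
  obtain ⟨⟨t, ht⟩, hnot⟩ := emultiplicity_eq_coe.1 (h.trans Nat.cast_one.symm)
  rw [pow_one] at ht
  exact ⟨t, ht, fun ⟨u, hu⟩ => hnot ⟨u, by rw [ht, hu]; ring⟩⟩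

theorem exists_add_eq_pow_of_pow_add_pow_eq_pow {n : ℕ} (hn : Odd n) {a b c : ℤ}
    (hab : IsCoprime a b) (habn : IsCoprime (a + b) n) (h : a ^ n + b ^ n = c ^ n) :
    ∃ e, a + b = e ^ n :=
  eq_pow_of_mul_eq_pow_odd_left (hab.geom_sum₂_neg_of_dvd_add dvd_rfl habn) hn
    (by rw [mul_comm, hn.geom_sum₂_neg_mul, h])

theorem exists_add_eq_prime_pow_mul_pow_of_pow_add_pow_eq_pow (hp : p.Prime)
    (hpodd : Odd p) {a b c : ℤ} (hab : IsCoprime a b) (hc : c ≠ 0) (hpc : (p : ℤ) ∣ c)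
    (h : a ^ p + b ^ p = c ^ p) :
    ∃ (c₀ c₁ : ℤ) (ν : ℕ), 1 ≤ ν ∧ a + b = (p : ℤ) ^ (ν * p - 1) * c₀ ^ p ∧
      a ^ p + b ^ p = (a + b) * ((p : ℤ) * c₁ ^ p) ∧ c = (p : ℤ) ^ ν * c₀ * c₁ := by
  have hpZ : Prime (p : ℤ) := Nat.prime_iff_prime_int.mp hp
  have hpab : (p : ℤ) ∣ a + b :=
    prime_dvd_add_of_dvd_pow_add_pow hp (h ▸ dvd_pow hpc hp.ne_zero)
  have hpa : ¬(p : ℤ) ∣ a := fun hpa =>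
    hpZ.not_isUnit (hab.isUnit_of_dvd' hpa ((dvd_add_right hpa).1 hpab))
  have hS := hpodd.geom_sum₂_neg_mul a b
  have hab0 : a + b ≠ 0 := by
    rintro hab0
    rw [hab0, mul_zero, h] at hS
    exact pow_ne_zero p hc hS.symm
  obtain ⟨t, hSt, hpt⟩ := exists_geom_sum₂_neg_eq_prime_mul_not_dvd hp hpodd hpab hpa
  obtain ⟨m, s, hs, hps⟩ := exists_eq_prime_pow_mul_not_dvd hp hab0
  obtain ⟨ν, w, hw, hpw⟩ := exists_eq_prime_pow_mul_not_dvd hp hc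
  have hst : IsCoprime s t :=
    (hab.geom_sum₂_neg_of_dvd_add (Dvd.intro_left _ hs.symm)
      ((Prime.coprime_iff_not_dvd hpZ).2 hps).symm).of_isCoprime_of_dvd_right
      (Dvd.intro_left _ hSt.symm)
  obtain ⟨hmν, hstw⟩ : m + 1 = ν * p ∧ s * t = w ^ p := by
    refine pow_mul_inj_of_not_dvd hpZ (fun hd => (hpZ.dvd_or_dvd hd).elim hps hpt)
      (fun hd => hpw (hpZ.dvd_of_dvd_pow hd)) ?_
    calc (p : ℤ) ^ (m + 1) * (s * t) = (p * t) * (p ^ m * s) := by ring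
      _ = c ^ p := by rw [← hSt, ← hs, hS, h]
      _ = (p : ℤ) ^ (ν * p) * w ^ p := by rw [hw, mul_pow, pow_mul]
  obtain ⟨⟨c₀, rfl⟩, ⟨c₁, rfl⟩⟩ := eq_pow_of_mul_eq_pow_odd hst hpodd hstw
  refine ⟨c₀, c₁, ν, Nat.pos_of_ne_zero ?_, ?_, ?_, ?_⟩
  · rintro rfl
    simp at hmν
  · rw [hs, show ν * p - 1 = m by omega]
  · rw [← hS, hSt]
    ring
  · rw [hw, mul_assoc, hpodd.pow_inj.1 (hstw.symm.trans (mul_pow c₀ c₁ p).symm)]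

end Int

theorem barlow_abel_relations_general (p : ℕ) (hp : p.Prime) (hpodd : Odd p)
    (x y z : ℤ) (hy : y ≠ 0)
    (hxy : IsCoprime x y) (hzx : IsCoprime z x)
    (hflt : x ^ p + y ^ p + z ^ p = 0) (hpy : (p : ℤ) ∣ y) :
    ∃ (y0 y1 z0 : ℤ) (ν : ℕ), 1 ≤ ν ∧
      x + z = (p : ℤ) ^ (ν * p - 1) * y0 ^ p ∧
      x ^ p + z ^ p = (x + z) * ((p : ℤ) * y1 ^ p) ∧
      y = -(p : ℤ) ^ ν * y0 * y1 ∧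
      x + y = z0 ^ p := by
  have hpZ : Prime (p : ℤ) := Nat.prime_iff_prime_int.mp hp
  have hpx : ¬(p : ℤ) ∣ x := fun hpx => hpZ.not_isUnit (hxy.isUnit_of_dvd' hpx hpy)
  obtain ⟨y0, y1, ν, hν, hxz, hquot, hy'⟩ :=
    Int.exists_add_eq_prime_pow_mul_pow_of_pow_add_pow_eq_pow hp hpodd hzx.symm
      (neg_ne_zero.2 hy) (dvd_neg.2 hpy) (by rw [hpodd.neg_pow]; linear_combination hflt)
  obtain ⟨z0, hz0⟩ := Int.exists_add_eq_pow_of_pow_add_pow_eq_pow (c := -z) hpodd hxy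
    ((Prime.coprime_iff_not_dvd hpZ).2 fun h => hpx ((dvd_add_left hpy).1 h)).symm
    (by rw [hpodd.neg_pow]; linear_combination hflt)
  exact ⟨y0, y1, z0, ν, hν, hxz, hquot, by linear_combination -hy', hz0⟩

theorem barlow_abel_relations (p : ℕ) (hp : p.Prime) (hpodd : Odd p)
    (x y z : ℤ) (hx : x ≠ 0) (hy : y ≠ 0) (hz : z ≠ 0)
    (hxy : IsCoprime x y) (hyz : IsCoprime y z) (hzx : IsCoprime z x)
    (hflt : x ^ p + y ^ p + z ^ p = 0) (hpy : (p : ℤ) ∣ y) :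
    ∃ (y0 y1 z0 : ℤ) (ν : ℕ), 1 ≤ ν ∧
      x + z = (p : ℤ) ^ (ν * p - 1) * y0 ^ p ∧
      x ^ p + z ^ p = (x + z) * ((p : ℤ) * y1 ^ p) ∧
      y = -(p : ℤ) ^ ν * y0 * y1 ∧
      x + y = z0 ^ p :=
  barlow_abel_relations_general p hp hpodd x y z hy hxy hzx hflt hpy
end
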